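/- arXiv:1201.4274 — 6 statements merged into one kernel-verified Lean document; each statement's English description precedes it below -/
import Mathlib

section
/- Let 𝔟 be the Lie algebra of upper triangular traceless 3×3 real matrices, 𝔞 the diagonal traceless matrices, and 𝔫 the strictly upper triangular matrices. If 𝔩 is a 2-dimensional abelian Lie subalgebra of 𝔟 with 𝔩 ⊆ 𝔫, then there exists [x : y] ∈ ℙ¹(ℝ) such that 𝔩 = {t·x·E₁₂ + t·y·E₂₃ + s·E₁₃ : t, s ∈ ℝ}, where Eᵢⱼ denotes the elementary matrix. -/
open Matrix

noncomputable section

/-- Elementary matrix `Eᵢⱼ` in `M₃(ℝ)`. -/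
def E (i j : Fin 3) : Matrix (Fin 3) (Fin 3) ℝ := Matrix.single i j 1

/-!
A strictly upper triangular `3 × 3` matrix is `a E₁₂ + b E₂₃ + c E₁₃`, and the `(1,3)` entry of the
commutator of two such matrices is the determinant `a b' - a' b`. Hence all elements of an abelian
`𝔩 ⊆ 𝔫` have proportional `(a, b)`, i.e. `𝔩 ⊆ span {x E₁₂ + y E₂₃, E₁₃}` for any `X ∈ 𝔩` with
`(x, y) := (a, b) ≠ 0`. Such an `X` exists because `𝔩` has dimension `2 > dim span {E₁₃}`, and the
inclusion is an equality since both sides have dimension `2`.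
-/

section LinearAlgebra

variable {K V : Type*} [Field K] [AddCommGroup V] [Module K V]

theorem exists_eq_mul_of_mul_eq_mul {x y a b : K} (hxy : (x, y) ≠ (0, 0)) (h : x * b = a * y) :
    ∃ l : K, a = l * x ∧ b = l * y := by
  rcases eq_or_ne x 0 with rfl | hx
  · have hy : y ≠ 0 := by rintro rfl; exact hxy rfl
    refine ⟨b / y, ?_, by field_simp⟩
    rw [zero_mul, eq_comm, mul_eq_zero] at h
    simpa [hy] using h
  · exact ⟨a / x, by field_simp, by field_simp; linear_combination h⟩

theorem Submodule.not_le_span_singleton_of_one_lt_finrank {L : Submodule K V}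
    (hL : 1 < Module.finrank K L) (v : V) : ¬ L ≤ K ∙ v := by
  intro hle
  have h := (Submodule.finrank_mono hle).trans (finrank_span_le_card (R := K) {v})
  rw [Set.toFinset_singleton, Finset.card_singleton] at h
  omega

theorem Submodule.eq_span_pair_of_le_of_two_le_finrank {L : Submodule K V}
    (hL : 2 ≤ Module.finrank K L) {u w : V} (hle : L ≤ span K {u, w}) : L = span K {u, w} := by
  classical
  have : FiniteDimensional K (span K {u, w}) := FiniteDimensional.span_of_finite K (Set.toFinite _)
  refine Submodule.eq_of_le_of_finrank_le hle ?_
  have h := finrank_span_finset_le_card (R := K) ({u, w} : Finset V)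
  rw [Set.finrank, Finset.coe_pair] at h
  exact h.trans (Finset.card_le_two.trans hL)

end LinearAlgebra

section StrictUpper

def IsStrictUpper {n R : Type*} [LT n] [Zero R] (X : Matrix n n R) : Prop :=
  ∀ i j, ¬ i < j → X i j = 0

theorem IsStrictUpper.mul_apply_zero_two {R : Type*} [NonUnitalNonAssocSemiring R]
    {X Y : Matrix (Fin 3) (Fin 3) R} (hX : IsStrictUpper X) (hY : IsStrictUpper Y) :
    (X * Y) 0 2 = X 0 1 * Y 1 2 := by
  simp [mul_apply, Fin.sum_univ_three, hX 0 0 (lt_irrefl _), hY 2 2 (lt_irrefl _)]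

theorem IsStrictUpper.eq_add_smul_E {X : Matrix (Fin 3) (Fin 3) ℝ} (hX : IsStrictUpper X) :
    X = (X 0 1 • E 0 1 + X 1 2 • E 1 2) + X 0 2 • E 0 2 := by
  unfold IsStrictUpper at hX
  ext i j
  fin_cases i <;> fin_cases j <;> simp [E, hX]

theorem IsStrictUpper.mem_span_E_of_apply_eq_zero {X : Matrix (Fin 3) (Fin 3) ℝ}
    (hX : IsStrictUpper X) (h : (X 0 1, X 1 2) = (0, 0)) : X ∈ ℝ ∙ E 0 2 := by
  obtain ⟨h01, h12⟩ := Prod.mk.inj h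
  rw [hX.eq_add_smul_E, h01, h12, zero_smul, zero_smul, zero_add, zero_add]
  exact Submodule.smul_mem _ _ (Submodule.mem_span_singleton_self _)

theorem IsStrictUpper.mem_span_pair_of_commute {X Z : Matrix (Fin 3) (Fin 3) ℝ}
    (hX : IsStrictUpper X) (hZ : IsStrictUpper Z) (hcomm : Z * X = X * Z)
    (hZne : (Z 0 1, Z 1 2) ≠ (0, 0)) :
    X ∈ Submodule.span ℝ {Z 0 1 • E 0 1 + Z 1 2 • E 1 2, E 0 2} := by
  have hdet : Z 0 1 * X 1 2 = X 0 1 * Z 1 2 := by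
    rw [← hZ.mul_apply_zero_two hX, ← hX.mul_apply_zero_two hZ, hcomm]
  obtain ⟨l, h01, h12⟩ := exists_eq_mul_of_mul_eq_mul hZne hdet
  refine Submodule.mem_span_pair.mpr ⟨l, X 0 2, ?_⟩
  conv_rhs => rw [hX.eq_add_smul_E, h01, h12]
  module

end StrictUpper

/-- If `𝔩` is a 2-dimensional abelian Lie subalgebra of the upper triangular traceless
matrices contained in the strictly upper triangular matrices `𝔫`, then there is
`[x : y] ∈ ℙ¹(ℝ)` with `𝔩 = {t x E₁₂ + t y E₂₃ + s E₁₃}`. -/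
theorem stmt0 (L : Submodule ℝ (Matrix (Fin 3) (Fin 3) ℝ))
    (hdim : Module.finrank ℝ L = 2)
    (habelian : ∀ X ∈ L, ∀ Y ∈ L, X * Y = Y * X)
    (hstrict : ∀ X ∈ L, ∀ i j : Fin 3, ¬ i < j → X i j = 0) :
    ∃ x y : ℝ, (x, y) ≠ (0, 0) ∧
      ∀ M : Matrix (Fin 3) (Fin 3) ℝ,
        M ∈ L ↔ ∃ t s : ℝ, M = t • (x • E 0 1 + y • E 1 2) + s • E 0 2 := by
  obtain ⟨Z, hZL, hZne⟩ : ∃ Z ∈ L, (Z 0 1, Z 1 2) ≠ (0, 0) := by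
    by_contra! h
    refine Submodule.not_le_span_singleton_of_one_lt_finrank (hdim ▸ one_lt_two) (E 0 2) ?_
    exact fun X hX => IsStrictUpper.mem_span_E_of_apply_eq_zero (hstrict X hX) (h X hX)
  have hL : L = Submodule.span ℝ {Z 0 1 • E 0 1 + Z 1 2 • E 1 2, E 0 2} :=
    Submodule.eq_span_pair_of_le_of_two_le_finrank hdim.ge fun X hX =>
      IsStrictUpper.mem_span_pair_of_commute (hstrict X hX) (hstrict Z hZL)
        (habelian Z hZL X hX) hZne
  refine ⟨Z 0 1, Z 1 2, hZne, fun M => ?_⟩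
  simp only [hL, Submodule.mem_span_pair, eq_comm]
end
end

section
/- Let 𝔩 be a 2-dimensional abelian Lie subalgebra of the upper triangular traceless 3×3 real matrices 𝔟. If the projection of 𝔩 onto the diagonal part 𝔞 (along the strictly upper triangular part 𝔫) is all of 𝔞 (which is 2-dimensional), then 𝔩 is conjugate to 𝔞 by an element of the unipotent upper triangular group N; that is, there exists b ∈ N with 𝔩 = b 𝔞 b⁻¹ (acting by Ad). -/
open Matrix

noncomputable section

set_option maxHeartbeats 1000000 in
/-- If a 2-dimensional abelian subalgebra `𝔩` of the upper triangular traceless 3×3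
matrices projects onto all of the diagonal part `𝔞`, then `𝔩 = Ad b (𝔞)` for a
unipotent upper triangular matrix `b`. -/
theorem stmt2 (L : Submodule ℝ (Matrix (Fin 3) (Fin 3) ℝ))
    (hborel : ∀ X ∈ L, (∀ i j : Fin 3, j < i → X i j = 0) ∧ Matrix.trace X = 0)
    (hdim : Module.finrank ℝ L = 2)
    (habelian : ∀ X ∈ L, ∀ Y ∈ L, X * Y = Y * X)
    (hproj : ∀ D : Matrix (Fin 3) (Fin 3) ℝ,
      (∀ i j : Fin 3, i ≠ j → D i j = 0) → Matrix.trace D = 0 →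
        ∃ X ∈ L, ∀ i : Fin 3, X i i = D i i) :
    ∃ b : Matrix (Fin 3) (Fin 3) ℝ,
      (∀ i : Fin 3, b i i = 1) ∧ (∀ i j : Fin 3, j < i → b i j = 0) ∧
      ∀ M : Matrix (Fin 3) (Fin 3) ℝ,
        M ∈ L ↔ ∃ D : Matrix (Fin 3) (Fin 3) ℝ,
          (∀ i j : Fin 3, i ≠ j → D i j = 0) ∧ Matrix.trace D = 0 ∧ M = b * D * b⁻¹ := by
  obtain ⟨X, hXL, hXd⟩ := hproj (Matrix.diagonal ![2, -1, -1])
    (fun i j h => Matrix.diagonal_apply_ne _ h)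
    (by simp [Matrix.trace, Matrix.diag, Fin.sum_univ_three, Matrix.diagonal]; norm_num)
  obtain ⟨Y, hYL, hYd⟩ := hproj (Matrix.diagonal ![-1, -1, 2])
    (fun i j h => Matrix.diagonal_apply_ne _ h)
    (by simp [Matrix.trace, Matrix.diag, Fin.sum_univ_three, Matrix.diagonal]; norm_num)
  set u : ℝ := X 0 1 with hu
  set v : ℝ := X 1 2 with hv
  set w : ℝ := X 0 2 with hw
  set u' : ℝ := Y 0 1 with hu'
  set v' : ℝ := Y 1 2 with hv'
  set w' : ℝ := Y 0 2 with hw'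
  have hXmat : X = !![2, u, w; 0, -1, v; 0, 0, -1] := by
    have h1 := (hborel X hXL).1
    ext i j
    fin_cases i <;> fin_cases j <;>
      simp [hu, hv, hw, Matrix.vecHead, Matrix.vecTail] <;>
      first
        | (exact h1 _ _ (by decide))
        | (simpa [Matrix.diagonal] using hXd 0)
        | (simpa [Matrix.diagonal] using hXd 1)
        | (simpa [Matrix.diagonal] using hXd 2)
  have hYmat0 : Y = !![-1, u', w'; 0, -1, v'; 0, 0, 2] := by
    have h1 := (hborel Y hYL).1
    ext i j
    fin_cases i <;> fin_cases j <;>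
      simp [hu', hv', hw', Matrix.vecHead, Matrix.vecTail] <;>
      first
        | (exact h1 _ _ (by decide))
        | (simpa [Matrix.diagonal] using hYd 0)
        | (simpa [Matrix.diagonal] using hYd 1)
        | (simpa [Matrix.diagonal] using hYd 2)
  have hcomm := habelian X hXL Y hYL
  rw [hXmat, hYmat0] at hcomm
  have e01 := congrFun (congrFun hcomm 0) 1
  have e12 := congrFun (congrFun hcomm 1) 2
  have e02 := congrFun (congrFun hcomm 0) 2
  simp [Matrix.mul_apply, Fin.sum_univ_three, Matrix.vecHead, Matrix.vecTail]
    at e01 e12 e02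
  have hu'0 : u' = 0 := by linarith
  have hv0 : v = 0 := by linarith
  have hw'eq : w' = -w - u * v' / 3 := by
    rw [hu'0, hv0] at e02
    ring_nf at e02 ⊢
    linarith
  rw [hv0] at hXmat
  rw [hu'0, hw'eq] at hYmat0
  -- zero lemma
  have hzero : ∀ Z ∈ L, (∀ i : Fin 3, Z i i = 0) → Z = 0 := by
    intro Z hZL hZd
    have h1 := (hborel Z hZL).1
    have hZmat : Z = !![0, Z 0 1, Z 0 2; 0, 0, Z 1 2; 0, 0, 0] := by
      ext i j
      fin_cases i <;> fin_cases j <;>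
        simp [Matrix.vecHead, Matrix.vecTail] <;>
        first
          | (exact h1 _ _ (by decide))
          | (exact hZd 0)
          | (exact hZd 1)
          | (exact hZd 2)
    have hcX := habelian X hXL Z hZL
    have hcY := habelian Y hYL Z hZL
    rw [hXmat, hZmat] at hcX
    rw [hYmat0, hZmat] at hcY
    have f01 := congrFun (congrFun hcX 0) 1
    have f12 := congrFun (congrFun hcY 1) 2
    simp [Matrix.mul_apply, Fin.sum_univ_three, Matrix.vecHead, Matrix.vecTail]
      at f01 f12
    have hZ01 : Z 0 1 = 0 := by linarith
    have hZ12 : Z 1 2 = 0 := by linarith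
    have f02 := congrFun (congrFun hcX 0) 2
    simp [Matrix.mul_apply, Fin.sum_univ_three, Matrix.vecHead, Matrix.vecTail,
      hZ01, hZ12] at f02
    have hZ02 : Z 0 2 = 0 := by linarith
    rw [hZmat, hZ01, hZ12, hZ02]
    ext i j
    fin_cases i <;> fin_cases j <;> simp [Matrix.vecHead, Matrix.vecTail]
  -- the unipotent matrix
  set b : Matrix (Fin 3) (Fin 3) ℝ :=
    !![1, -u/3, -u*v'/9 - w/3; 0, 1, v'/3; 0, 0, 1] with hb
  set bi : Matrix (Fin 3) (Fin 3) ℝ :=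
    !![1, u/3, w/3; 0, 1, -v'/3; 0, 0, 1] with hbi
  have hbbi : b * bi = 1 := by
    rw [hb, hbi]
    ext i j
    fin_cases i <;> fin_cases j <;>
      simp [Matrix.mul_apply, Fin.sum_univ_three, Matrix.one_apply,
        Matrix.vecHead, Matrix.vecTail] <;> ring
  have hinv : b⁻¹ = bi := Matrix.inv_eq_right_inv hbbi
  have hconj : ∀ c₁ c₂ : ℝ,
      b * !![2*c₁ - c₂, 0, 0; 0, -c₁ - c₂, 0; 0, 0, -c₁ + 2*c₂] * bi
        = c₁ • X + c₂ • Y := by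
    intro c₁ c₂
    rw [hXmat, hYmat0, hb, hbi]
    ext i j
    fin_cases i <;> fin_cases j <;>
      simp [Matrix.mul_apply, Fin.sum_univ_three, Matrix.vecHead,
        Matrix.vecTail] <;> ring
  refine ⟨b, ?_, ?_, ?_⟩
  · intro i; fin_cases i <;> simp [hb, Matrix.vecHead, Matrix.vecTail]
  · intro i j h
    fin_cases i <;> fin_cases j <;>
      first
        | (exact absurd h (by decide))
        | (simp [hb, Matrix.vecHead, Matrix.vecTail])
  · intro M
    constructor
    · intro hML
      set c₁ : ℝ := (2 * M 0 0 + M 2 2) / 3 with hc₁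
      set c₂ : ℝ := (M 0 0 + 2 * M 2 2) / 3 with hc₂
      have htr := (hborel M hML).2
      have htr3 : M 0 0 + M 1 1 + M 2 2 = 0 := by
        simpa [Matrix.trace, Matrix.diag, Fin.sum_univ_three] using htr
      have hZL : M - (c₁ • X + c₂ • Y) ∈ L :=
        Submodule.sub_mem _ hML (Submodule.add_mem _ (Submodule.smul_mem _ _ hXL)
          (Submodule.smul_mem _ _ hYL))
      have hZd : ∀ i : Fin 3, (M - (c₁ • X + c₂ • Y)) i i = 0 := by
        intro i
        fin_cases i <;>
          simp [hXmat, hYmat0, Matrix.sub_apply, Matrix.add_apply, Matrix.smul_apply,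
            hc₁, hc₂, Matrix.vecHead, Matrix.vecTail] <;> linarith
      have hMeq : M = c₁ • X + c₂ • Y :=
        eq_of_sub_eq_zero (hzero _ hZL hZd)
      refine ⟨!![2*c₁ - c₂, 0, 0; 0, -c₁ - c₂, 0; 0, 0, -c₁ + 2*c₂], ?_, ?_, ?_⟩
      · intro i j h
        fin_cases i <;> fin_cases j <;>
          first
            | (exact absurd rfl h)
            | (simp [Matrix.vecHead, Matrix.vecTail])
      · simp [Matrix.trace, Matrix.diag, Fin.sum_univ_three, Matrix.vecHead,
          Matrix.vecTail]
        ring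
      · rw [hinv, hconj]
        exact hMeq
    · rintro ⟨D, hDdiag, hDtr, rfl⟩
      set c₁ : ℝ := (2 * D 0 0 + D 2 2) / 3 with hc₁
      set c₂ : ℝ := (D 0 0 + 2 * D 2 2) / 3 with hc₂
      have htr3 : D 0 0 + D 1 1 + D 2 2 = 0 := by
        simpa [Matrix.trace, Matrix.diag, Fin.sum_univ_three] using hDtr
      have hDeq : D = !![2*c₁ - c₂, 0, 0; 0, -c₁ - c₂, 0; 0, 0, -c₁ + 2*c₂] := by
        ext i j
        fin_cases i <;> fin_cases j <;>
          simp [hc₁, hc₂, Matrix.vecHead, Matrix.vecTail] <;>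
          first
            | ring1
            | linarith
            | (exact hDdiag _ _ (by decide))
      rw [hinv, hDeq, hconj]
      exact Submodule.add_mem _ (Submodule.smul_mem _ _ hXL) (Submodule.smul_mem _ _ hYL)


end
end

section
/- In 𝔰𝔩₃(ℝ), the normalizer of the subalgebra 𝔩_{[1:1]} = {s(E₁₂ + E₂₃) + tE₁₃ : s, t ∈ ℝ} in SL₃(ℝ) equals the group B' of upper triangular matrices diag entries (a,b,c) (with arbitrary strictly upper entries) satisfying a/b = b/c and abc = 1. -/
open Matrix

noncomputable section

/-- The subalgebra `𝔩_{[1:1]} = {s(E₁₂ + E₂₃) + t E₁₃}`. -/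
def L11 : Set (Matrix (Fin 3) (Fin 3) ℝ) :=
  {M | ∃ s t : ℝ, M = s • (E 0 1 + E 1 2) + t • E 0 2}

/-!
Write `N = E₁₂ + E₂₃`, so that `𝔩_{[1:1]}` is spanned by `N` and `N² = E₁₃`, and
`(sN + tN²)² = s²N²`. The line `ℝ E₁₃` is therefore the set of square-zero elements of
`𝔩_{[1:1]}`, and a normalizing `g` must satisfy `g E₁₃ = t E₁₃ g` with `t ≠ 0`; comparing
entries makes `g` upper triangular, with diagonal `(a, b, c)` say. Then `g N = (sN + t'N²) g`
gives `b = s c` and `a = s b`, i.e. `a/b = b/c`. Conversely, for such `g` conjugation acts on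
the coordinates `(s, t)` by an invertible triangular linear map.
-/

def l11 (s t : ℝ) : Matrix (Fin 3) (Fin 3) ℝ := s • (E 0 1 + E 1 2) + t • E 0 2

lemma L11_eq_range : L11 = Set.range (Function.uncurry l11) := by
  ext M
  simp [L11, l11, eq_comm]

lemma l11_mul_self (s t : ℝ) : l11 s t * l11 s t = (s ^ 2) • E 0 2 := by
  ext i j
  fin_cases i <;> fin_cases j <;> simp [l11, E, mul_apply, Fin.sum_univ_three, single, sq]

lemma E02_mul_self : E 0 2 * E 0 2 = 0 := by
  ext i j
  fin_cases i <;> fin_cases j <;> simp [E, mul_apply, single]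

lemma eq_smul_E02_of_mul_self_eq_zero {X : Matrix (Fin 3) (Fin 3) ℝ} (hX : X ∈ L11)
    (hX2 : X * X = 0) : ∃ t : ℝ, X = t • E 0 2 := by
  obtain ⟨s, t, rfl⟩ := hX
  have hs : s ^ 2 = 0 := by
    simpa [E] using congrFun (congrFun ((l11_mul_self s t).symm.trans hX2) 0) 2
  exact ⟨t, by simp [pow_eq_zero_iff two_ne_zero |>.mp hs]⟩

lemma det_eq_of_upperTriangular {A : Matrix (Fin 3) (Fin 3) ℝ} (h10 : A 1 0 = 0)
    (h20 : A 2 0 = 0) (h21 : A 2 1 = 0) : A.det = A 0 0 * A 1 1 * A 2 2 := by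
  simp [det_fin_three, h10, h20, h21]

lemma upperTriangular_of_mul_E02_eq_smul_E02_mul {A : Matrix (Fin 3) (Fin 3) ℝ}
    (hA : A.det ≠ 0) {t : ℝ} (h : A * E 0 2 = t • (E 0 2 * A)) :
    A 1 0 = 0 ∧ A 2 0 = 0 ∧ A 2 1 = 0 := by
  have entry := fun i j => congrFun (congrFun h i) j
  have h10 : A 1 0 = 0 := by simpa [E, mul_apply, Fin.sum_univ_three, single] using entry 1 2
  have h20 : A 2 0 = 0 := by simpa [E, mul_apply, Fin.sum_univ_three, single] using entry 2 2
  have h00 : A 0 0 = t * A 2 2 := by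
    simpa [E, mul_apply, Fin.sum_univ_three, single] using entry 0 2
  have h21 : t * A 2 1 = 0 := by
    simpa [E, mul_apply, Fin.sum_univ_three, single] using (entry 0 1).symm
  have ht : t ≠ 0 := by
    rintro rfl
    exact hA (by simp [det_fin_three, h00, h10, h20])
  exact ⟨h10, h20, (mul_eq_zero.mp h21).resolve_left ht⟩

lemma div_eq_div_of_mul_eq_l11_mul {A : Matrix (Fin 3) (Fin 3) ℝ} (h21 : A 2 1 = 0) {s t : ℝ}
    (h : A * (E 0 1 + E 1 2) = l11 s t * A) : A 0 0 / A 1 1 = A 1 1 / A 2 2 := by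
  have entry := fun i j => congrFun (congrFun h i) j
  have h01 : A 0 0 = s * A 1 1 := by
    simpa [l11, E, mul_apply, Fin.sum_univ_three, single, h21] using entry 0 1
  have h12 : A 1 1 = s * A 2 2 := by
    simpa [l11, E, mul_apply, Fin.sum_univ_three, single] using entry 1 2
  rcases eq_or_ne (A 1 1) 0 with h11 | h11
  · simp [h11]
  have h22 : A 2 2 ≠ 0 := fun h22 => h11 (by rw [h12, h22, mul_zero])
  rw [div_eq_div_iff h11 h22, h01, h12]
  ring

lemma mul_l11_eq_l11_mul {A : Matrix (Fin 3) (Fin 3) ℝ} (h10 : A 1 0 = 0) (h20 : A 2 0 = 0)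
    (h21 : A 2 1 = 0) (hA : A 0 0 * A 2 2 = A 1 1 ^ 2) (h22 : A 2 2 ≠ 0) (s t : ℝ) :
    A * l11 s t = l11 (A 1 1 / A 2 2 * s)
      ((A 0 1 * A 2 2 - A 1 1 * A 1 2) / A 2 2 ^ 2 * s + A 0 0 / A 2 2 * t) * A := by
  ext i j
  fin_cases i <;> fin_cases j <;>
    simp [l11, E, mul_apply, Fin.sum_univ_three, single, h10, h20, h21] <;> field_simp
  all_goals first | ring1 | linear_combination s * hA

lemma mul_mul_eq_iff_mul_eq_mul {M : Type*} [Monoid M] {a b : M} (hab : a * b = 1)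
    (hba : b * a = 1) (x y : M) : a * x * b = y ↔ a * x = y * a := by
  constructor
  · rintro rfl
    rw [mul_assoc _ b, hba, mul_one]
  · rintro h
    rw [h, mul_assoc, hab, mul_one]

lemma surjective_triangular {α β κ : ℝ} (hα : α ≠ 0) (hβ : β ≠ 0) :
    Function.Surjective fun p : ℝ × ℝ => (α * p.1, κ * p.1 + β * p.2) := fun q =>
  ⟨(q.1 / α, (q.2 - κ * (q.1 / α)) / β), by
    ext
    · field_simp
    · field_simp
      ring⟩

lemma image_mul_mul_L11_eq {A B : Matrix (Fin 3) (Fin 3) ℝ} (hAB : A * B = 1)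
    (hBA : B * A = 1) (h10 : A 1 0 = 0) (h20 : A 2 0 = 0) (h21 : A 2 1 = 0)
    (hA : A 0 0 * A 2 2 = A 1 1 ^ 2) (h00 : A 0 0 ≠ 0) (h11 : A 1 1 ≠ 0) (h22 : A 2 2 ≠ 0) :
    (fun X => A * X * B) '' L11 = L11 := by
  have hconj : (fun X => A * X * B) ∘ Function.uncurry l11 =
      Function.uncurry l11 ∘ fun p => (A 1 1 / A 2 2 * p.1,
        (A 0 1 * A 2 2 - A 1 1 * A 1 2) / A 2 2 ^ 2 * p.1 + A 0 0 / A 2 2 * p.2) :=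
    funext fun p => (mul_mul_eq_iff_mul_eq_mul hAB hBA _ _).2
      (mul_l11_eq_l11_mul h10 h20 h21 hA h22 p.1 p.2)
  rw [L11_eq_range, ← Set.range_comp, hconj,
    (surjective_triangular (div_ne_zero h11 h22) (div_ne_zero h00 h22)).range_comp]

lemma upperTriangular_of_image_mul_mul_L11_eq {A B : Matrix (Fin 3) (Fin 3) ℝ}
    (hAB : A * B = 1) (hBA : B * A = 1) (h : (fun X => A * X * B) '' L11 = L11) :
    A 1 0 = 0 ∧ A 2 0 = 0 ∧ A 2 1 = 0 ∧ A 0 0 / A 1 1 = A 1 1 / A 2 2 := by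
  have hA : A.det ≠ 0 := by
    intro h0
    simpa [h0] using congrArg det hAB
  have conj_mem : ∀ X ∈ L11, A * X * B ∈ L11 := fun X hX => h ▸ ⟨X, hX, rfl⟩
  obtain ⟨t, ht⟩ : ∃ t : ℝ, A * E 0 2 * B = t • E 0 2 := by
    refine eq_smul_E02_of_mul_self_eq_zero (conj_mem (E 0 2) ⟨0, 1, by simp⟩) ?_
    calc A * E 0 2 * B * (A * E 0 2 * B) = A * E 0 2 * (B * A) * E 0 2 * B := by
          simp only [Matrix.mul_assoc]
      _ = 0 := by
          rw [hBA, Matrix.mul_one, Matrix.mul_assoc A, E02_mul_self, Matrix.mul_zero,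
            Matrix.zero_mul]
  obtain ⟨h10, h20, h21⟩ := upperTriangular_of_mul_E02_eq_smul_E02_mul hA (t := t)
    (by rw [← smul_mul, ← (mul_mul_eq_iff_mul_eq_mul hAB hBA _ _).1 ht])
  obtain ⟨s, t', hN⟩ := conj_mem (E 0 1 + E 1 2) ⟨1, 0, by simp⟩
  exact ⟨h10, h20, h21,
    div_eq_div_of_mul_eq_l11_mul h21 ((mul_mul_eq_iff_mul_eq_mul hAB hBA _ _).1 hN)⟩

/-- The normalizer of `𝔩_{[1:1]}` in `SL₃(ℝ)` is the group `B'` of upper triangular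
matrices with diagonal entries `(a, b, c)` satisfying `a/b = b/c`. -/
theorem stmt4 (g : Matrix.SpecialLinearGroup (Fin 3) ℝ) :
    ((fun X => (g : Matrix (Fin 3) (Fin 3) ℝ) * X * ((g⁻¹ : Matrix.SpecialLinearGroup (Fin 3) ℝ) :
        Matrix (Fin 3) (Fin 3) ℝ)) '' L11 = L11) ↔
      ((g : Matrix (Fin 3) (Fin 3) ℝ) 1 0 = 0 ∧
       (g : Matrix (Fin 3) (Fin 3) ℝ) 2 0 = 0 ∧
       (g : Matrix (Fin 3) (Fin 3) ℝ) 2 1 = 0 ∧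
       (g : Matrix (Fin 3) (Fin 3) ℝ) 0 0 / (g : Matrix (Fin 3) (Fin 3) ℝ) 1 1 =
         (g : Matrix (Fin 3) (Fin 3) ℝ) 1 1 / (g : Matrix (Fin 3) (Fin 3) ℝ) 2 2) := by
  have hAB := congrArg Subtype.val (mul_inv_cancel g)
  have hBA := congrArg Subtype.val (inv_mul_cancel g)
  refine ⟨upperTriangular_of_image_mul_mul_L11_eq hAB hBA, fun ⟨h10, h20, h21, hdiv⟩ => ?_⟩
  have hdet : (g : Matrix (Fin 3) (Fin 3) ℝ) 0 0 * g 1 1 * g 2 2 = 1 := by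
    rw [← det_eq_of_upperTriangular h10 h20 h21]
    exact g.2
  have h01 := left_ne_zero_of_mul_eq_one hdet
  have h22 := right_ne_zero_of_mul_eq_one hdet
  rw [div_eq_div_iff (right_ne_zero_of_mul h01) h22, ← sq] at hdiv
  exact image_mul_mul_L11_eq hAB hBA h10 h20 h21 hdiv
    (left_ne_zero_of_mul h01) (right_ne_zero_of_mul h01) h22
end
end

section
/- Let b(x,y,z) be the unipotent upper triangular 3×3 matrix with entries b₁₂ = x, b₂₃ = y, b₁₃ = z + xy/2, and let 𝔞 ⊂ 𝔰𝔩₃(ℝ) be the diagonal traceless matrices. If (xₙ) → ∞ and (yₙ, zₙ + xₙyₙ/2) → (y, z) in ℝ², then the sequence of subalgebras Ad b(xₙ,yₙ,zₙ)(𝔞) converges in the Grassmannian of 2-planes of 𝔰𝔩₃(ℝ) to Ad b(0,y,z)(𝔩_α), where 𝔩_α = ℝ·diag(1/3,1/3,−2/3) ⊕ ℝE₁₂. -/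
open Matrix Filter

noncomputable section

/-- Convergence of a sequence of subspaces (given as subsets of the ambient space) to a
limit subspace, in the Kuratowski sense; for subspaces of a fixed finite dimension this
is exactly convergence in the Grassmannian. -/
def GrLimit {M : Type*} [TopologicalSpace M] (W : ℕ → Set M) (L : Set M) : Prop :=
  (∀ v ∈ L, ∃ u : ℕ → M, (∀ n, u n ∈ W n) ∧ Tendsto u atTop (nhds v)) ∧
  (∀ φ : ℕ → ℕ, StrictMono φ → ∀ u : ℕ → M, (∀ n, u n ∈ W (φ n)) →
    ∀ v : M, Tendsto u atTop (nhds v) → v ∈ L)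

/-- `b(x,y,z)`: unipotent upper triangular with entries `x`, `y`, `z + xy/2`. -/
def bmat (x y z : ℝ) : Matrix (Fin 3) (Fin 3) ℝ :=
  !![1, x, z + x*y/2; 0, 1, y; 0, 0, 1]

/-- The Cartan subspace `𝔞` of diagonal traceless matrices, as a set. -/
def diagSet : Set (Matrix (Fin 3) (Fin 3) ℝ) :=
  {D | (∀ i j : Fin 3, i ≠ j → D i j = 0) ∧ Matrix.trace D = 0}

/-- `H_β = diag(1/3, 1/3, -2/3)`. -/
def Hβ : Matrix (Fin 3) (Fin 3) ℝ := !![1/3, 0, 0; 0, 1/3, 0; 0, 0, -2/3]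

/-!
Write `b(x,y,z) = b(0,y,w) b(x,0,0)` with `w = z + xy/2`. On a diagonal matrix `D`,
`Ad b(x,0,0) D = D + x (D₂₂ - D₁₁) E₁₂`, so as `|xₙ| → ∞` the planes `Ad b(xₙ,0,0) 𝔞` converge
to `𝔩_α`: a limit keeps a bounded `E₁₂`-coefficient only if `D₂₂ - D₁₁ = O(1/xₙ)` tends to `0`,
and conversely `t E₁₂` is reached by taking `D₂₂ - D₁₁ = t/xₙ`. Kuratowski limits are carried
along by the convergent family of homeomorphisms `Ad b(0,yₙ,wₙ) → Ad b(0,y,z)`.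
-/

open Topology

theorem GrLimit.image_of_tendsto {P M : Type*} [TopologicalSpace P] [TopologicalSpace M]
    {W : ℕ → Set M} {L : Set M} (h : GrLimit W L) {f g : P → M → M}
    (hf : Continuous (Function.uncurry f)) (hg : Continuous (Function.uncurry g))
    (hgf : ∀ p X, g p (f p X) = X) (hfg : ∀ p X, f p (g p X) = X)
    {p : ℕ → P} {p₀ : P} (hp : Tendsto p atTop (𝓝 p₀)) :
    GrLimit (fun n => f (p n) '' W n) (f p₀ '' L) := by
  constructor
  · rintro _ ⟨l, hl, rfl⟩
    obtain ⟨w, hwW, hwl⟩ := h.1 l hl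
    exact ⟨fun n => f (p n) (w n), fun n => Set.mem_image_of_mem _ (hwW n),
      hf.continuousAt.tendsto.comp (hp.prodMk_nhds hwl)⟩
  · intro φ hφ u hu v hv
    choose w hwW hwu using hu
    have hpφ : Tendsto (p ∘ φ) atTop (𝓝 p₀) := hp.comp hφ.tendsto_atTop
    have hw : Tendsto w atTop (𝓝 (g p₀ v)) := by
      have := hg.continuousAt.tendsto.comp (hpφ.prodMk_nhds hv)
      refine this.congr fun n => ?_
      simp [← hwu n, hgf]
    exact ⟨g p₀ v, h.2 φ hφ w hwW _ hw, hfg _ _⟩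

def adb (p : ℝ × ℝ × ℝ) (X : Matrix (Fin 3) (Fin 3) ℝ) : Matrix (Fin 3) (Fin 3) ℝ :=
  bmat p.1 p.2.1 p.2.2 * X * (bmat p.1 p.2.1 p.2.2)⁻¹

theorem bmat_mul_bmat_neg (x y z : ℝ) : bmat x y z * bmat (-x) (-y) (-z) = 1 := by
  ext i j
  fin_cases i <;> fin_cases j <;> simp [bmat, Matrix.mul_apply, Fin.sum_univ_three]; ring

theorem bmat_inv (x y z : ℝ) : (bmat x y z)⁻¹ = bmat (-x) (-y) (-z) :=
  Matrix.inv_eq_right_inv (bmat_mul_bmat_neg x y z)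

theorem bmat_eq_mul (x y z : ℝ) : bmat x y z = bmat 0 y (z + x * y / 2) * bmat x 0 0 := by
  ext i j
  fin_cases i <;> fin_cases j <;> simp [bmat, Matrix.mul_apply, Fin.sum_univ_three]

theorem continuous_bmat : Continuous fun p : ℝ × ℝ × ℝ => bmat p.1 p.2.1 p.2.2 := by
  refine continuous_pi fun i => continuous_pi fun j => ?_
  fin_cases i <;> fin_cases j <;> simp only [bmat] <;> fun_prop

theorem continuous_adb : Continuous (Function.uncurry adb) := by
  simp only [Function.uncurry_def, adb, bmat_inv]
  have hb := continuous_bmat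
  have hb' : Continuous fun p : ℝ × ℝ × ℝ => bmat (-p.1) (-p.2.1) (-p.2.2) :=
    continuous_bmat.comp (by fun_prop : Continuous fun p : ℝ × ℝ × ℝ => -p)
  fun_prop

theorem adb_neg_adb (p : ℝ × ℝ × ℝ) (X : Matrix (Fin 3) (Fin 3) ℝ) : adb (-p) (adb p X) = X := by
  obtain ⟨x, y, z⟩ := p
  have h : bmat (-x) (-y) (-z) * bmat x y z = 1 := by
    simpa using bmat_mul_bmat_neg (-x) (-y) (-z)
  simp only [adb, bmat_inv, Prod.neg_mk, neg_neg]
  rw [Matrix.mul_assoc, Matrix.mul_assoc, h, Matrix.mul_one, ← Matrix.mul_assoc, h, Matrix.one_mul]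

theorem adb_eq_comp (x y z : ℝ) : adb (x, y, z) = adb (0, y, z + x * y / 2) ∘ adb (x, 0, 0) := by
  ext1 X
  simp only [adb, Function.comp_apply, bmat_eq_mul x y z, Matrix.mul_inv_rev, Matrix.mul_assoc]

theorem eq_diag_of_mem_diagSet {D : Matrix (Fin 3) (Fin 3) ℝ} (hD : D ∈ diagSet) :
    D = !![D 0 0, 0, 0; 0, D 1 1, 0; 0, 0, D 2 2] := by
  ext i j
  fin_cases i <;> fin_cases j <;> simp [hD.1]

theorem adb_of_mem_diagSet (x : ℝ) {D : Matrix (Fin 3) (Fin 3) ℝ} (hD : D ∈ diagSet) :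
    adb (x, 0, 0) D = D + (x * (D 1 1 - D 0 0)) • E 0 1 := by
  rw [eq_diag_of_mem_diagSet hD]
  simp only [adb, bmat_inv]
  ext i j
  fin_cases i <;> fin_cases j <;>
    simp [bmat, E, Matrix.mul_apply, Fin.sum_univ_three]; ring

theorem isClosed_diagSet : IsClosed diagSet := by
  simp only [diagSet, Set.ofPred_and, Set.ofPred_forall]
  refine IsClosed.inter ?_ (isClosed_eq continuous_id.matrix_trace continuous_const)
  exact isClosed_iInter fun i => isClosed_iInter fun j => isClosed_iInter fun _ =>
    isClosed_eq ((continuous_apply j).comp (continuous_apply i)) continuous_const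

theorem eq_smul_Hβ_of_mem_diagSet {D : Matrix (Fin 3) (Fin 3) ℝ} (hD : D ∈ diagSet)
    (h : D 1 1 = D 0 0) : D = (3 * D 0 0) • Hβ := by
  have htr := hD.2
  rw [Matrix.trace_fin_three] at htr
  rw [eq_diag_of_mem_diagSet hD]
  ext i j
  fin_cases i <;> fin_cases j <;> simp [Hβ] <;> linarith

theorem tendsto_inv_of_tendsto_abs_atTop {α : Type*} {l : Filter α} {x : α → ℝ}
    (hx : Tendsto (fun n => |x n|) l atTop) : Tendsto (fun n => (x n)⁻¹) l (𝓝 0) :=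
  tendsto_inv₀_cobounded.comp (tendsto_norm_atTop_iff_cobounded.1 hx)

theorem exists_tendsto_adb_diagSet {x : ℕ → ℝ} (hx : Tendsto (fun n => |x n|) atTop atTop)
    (s t : ℝ) : ∃ u : ℕ → Matrix (Fin 3) (Fin 3) ℝ, (∀ n, u n ∈ adb (x n, 0, 0) '' diagSet) ∧
      Tendsto u atTop (𝓝 (s • Hβ + t • E 0 1)) := by
  set K : Matrix (Fin 3) (Fin 3) ℝ := !![-1, 0, 0; 0, 1, 0; 0, 0, 0]
  set e : ℕ → ℝ := fun n => t / 2 * (x n)⁻¹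
  have hD : ∀ n, s • Hβ + e n • K ∈ diagSet := fun n => by
    refine ⟨fun i j hij => ?_, ?_⟩
    · fin_cases i <;> fin_cases j <;> simp [Hβ, K] at hij ⊢
    · simp [Matrix.trace_fin_three, Hβ, K]; ring
  refine ⟨fun n => adb (x n, 0, 0) (s • Hβ + e n • K), fun n => ⟨_, hD n, rfl⟩, ?_⟩
  have he : Tendsto e atTop (𝓝 0) := by
    simpa using (tendsto_inv_of_tendsto_abs_atTop hx).const_mul (t / 2)
  have hlim : Tendsto (fun n => s • Hβ + e n • K + t • E 0 1) atTop (𝓝 (s • Hβ + t • E 0 1)) := by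
    simpa using ((he.smul_const K).const_add (s • Hβ)).add_const (t • E 0 1)
  refine hlim.congr' ?_
  filter_upwards [hx.eventually_gt_atTop 0] with n hn
  have hxn : x n ≠ 0 := abs_pos.1 hn
  rw [adb_of_mem_diagSet _ (hD n)]
  congr 2
  simp [Hβ, K, e]
  field_simp
  ring

theorem mem_of_tendsto_adb_diagSet {x : ℕ → ℝ} (hx : Tendsto (fun n => |x n|) atTop atTop)
    {u : ℕ → Matrix (Fin 3) (Fin 3) ℝ} (hu : ∀ n, u n ∈ adb (x n, 0, 0) '' diagSet)
    {v : Matrix (Fin 3) (Fin 3) ℝ} (hv : Tendsto u atTop (𝓝 v)) :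
    v ∈ {M | ∃ s t : ℝ, M = s • Hβ + t • E 0 1} := by
  choose D hD hDu using hu
  have hu_eq : ∀ n, u n = D n + u n 0 1 • E 0 1 := fun n => by
    rw [← hDu n, adb_of_mem_diagSet _ (hD n)]
    simp [E, (hD n).1 0 1 (by decide)]
  have hu01 : ∀ n, u n 0 1 = x n * (D n 1 1 - D n 0 0) := fun n => by
    rw [← hDu n, adb_of_mem_diagSet _ (hD n)]
    simp [E, (hD n).1 0 1 (by decide)]
  set D₀ := v - v 0 1 • E 0 1
  have hDlim : Tendsto D atTop (𝓝 D₀) := by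
    have := hv.sub ((hv.apply_nhds 0).apply_nhds 1 |>.smul_const (E 0 1))
    refine this.congr fun n => ?_
    rw [sub_eq_iff_eq_add]; exact hu_eq n
  have hD₀ : D₀ ∈ diagSet := isClosed_diagSet.mem_of_tendsto hDlim (Eventually.of_forall hD)
  have hgap : Tendsto (fun n => D n 1 1 - D n 0 0) atTop (𝓝 0) := by
    have := (tendsto_inv_of_tendsto_abs_atTop hx).mul ((hv.apply_nhds 0).apply_nhds 1)
    rw [zero_mul] at this
    refine this.congr' ?_
    filter_upwards [hx.eventually_gt_atTop 0] with n hn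
    rw [hu01, inv_mul_cancel_left₀ (abs_pos.1 hn)]
  have h11 : D₀ 1 1 = D₀ 0 0 := sub_eq_zero.1 <| tendsto_nhds_unique
    (((hDlim.apply_nhds 1).apply_nhds 1).sub ((hDlim.apply_nhds 0).apply_nhds 0)) hgap
  refine ⟨3 * D₀ 0 0, v 0 1, ?_⟩
  rw [← eq_smul_Hβ_of_mem_diagSet hD₀ h11, sub_add_cancel]

theorem grLimit_adb_diagSet {x : ℕ → ℝ} (hx : Tendsto (fun n => |x n|) atTop atTop) :
    GrLimit (fun n => adb (x n, 0, 0) '' diagSet) {M | ∃ s t : ℝ, M = s • Hβ + t • E 0 1} := by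
  refine ⟨?_, fun φ hφ _ hu _ hv =>
    mem_of_tendsto_adb_diagSet (x := x ∘ φ) (hx.comp hφ.tendsto_atTop) hu hv⟩
  rintro _ ⟨s, t, rfl⟩
  exact exists_tendsto_adb_diagSet hx s t

/-- If `xₙ → ∞` and `(yₙ, zₙ + xₙyₙ/2) → (y, z)`, then `Ad b(xₙ,yₙ,zₙ)(𝔞)` converges in
the Grassmannian to `Ad b(0,y,z)(𝔩_α)`, where `𝔩_α = ℝH_β ⊕ ℝE₁₂`. -/
theorem stmt5 (x y z : ℕ → ℝ) (yl zl : ℝ)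
    (hx : Tendsto (fun n => |x n|) atTop atTop)
    (hyz : Tendsto (fun n => (y n, z n + x n * y n / 2)) atTop (nhds (yl, zl))) :
    GrLimit
      (fun n => (fun X => bmat (x n) (y n) (z n) * X * (bmat (x n) (y n) (z n))⁻¹) '' diagSet)
      ((fun X => bmat 0 yl zl * X * (bmat 0 yl zl)⁻¹) ''
        {M | ∃ s t : ℝ, M = s • Hβ + t • E 0 1}) := by
  have hp : Tendsto (fun n => ((0 : ℝ), y n, z n + x n * y n / 2)) atTop (𝓝 (0, yl, zl)) :=
    tendsto_const_nhds.prodMk_nhds hyz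
  have hg : Continuous (Function.uncurry fun p : ℝ × ℝ × ℝ => adb (-p)) :=
    continuous_adb.comp (f := fun q : (ℝ × ℝ × ℝ) × Matrix (Fin 3) (Fin 3) ℝ => (-q.1, q.2))
      (by fun_prop)
  have hlim := (grLimit_adb_diagSet hx).image_of_tendsto continuous_adb hg adb_neg_adb
    (fun p X => by simpa using adb_neg_adb (-p) X) hp
  have hW : ∀ n, adb (x n, y n, z n) '' diagSet =
      adb (0, y n, z n + x n * y n / 2) '' (adb (x n, 0, 0) '' diagSet) := fun n => by
    rw [adb_eq_comp, Set.image_comp]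
  simp only [← hW] at hlim
  exact hlim
end
end

section
/- For m ≥ 7, there exists an abelian Lie subalgebra of 𝔰𝔩_m(ℝ) of dimension m − 1, contained in the standard Borel subalgebra of upper triangular traceless matrices, which is not a limit in the Grassmannian Gr_{m−1}(𝔰𝔩_m(ℝ)) of Cartan subspaces of 𝔰𝔩_m(ℝ). -/
/-!
Cartan subspaces of `𝔰𝔩_m(ℝ)` are closed under the continuous map
`X ↦ X² - (tr X² / m) • 1`: this matrix is traceless, commutes with the Cartan subspace and is
simultaneously diagonalizable with it, so maximality puts it inside. Hence every limit of Cartan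
subspaces is closed under this map as well. The abelian subspace spanned by `E₂₂ - E₃₃` and
`m - 2` root vectors `E_rc` with `r < 2` and `4 ≤ c` is not: the traceless part of
`(E₂₂ - E₃₃)²` has `(0,0)`-entry `-2/m`, whereas every element of the span has `(0,0)`-entry `0`.
-/

open Matrix Filter

noncomputable section

/-- A matrix is diagonalizable over `ℝ`. -/
def IsRealDiagonalizable {m : ℕ} (X : Matrix (Fin m) (Fin m) ℝ) : Prop :=
  ∃ P : Matrix (Fin m) (Fin m) ℝ, ∃ d : Fin m → ℝ,
    IsUnit P.det ∧ X = P * Matrix.diagonal d * P⁻¹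

/-- A Cartan subspace of `𝔰𝔩_m(ℝ)`: a maximal abelian subalgebra consisting of traceless
matrices diagonalizable over `ℝ`. -/
def IsCartanSubspace {m : ℕ} (C : Submodule ℝ (Matrix (Fin m) (Fin m) ℝ)) : Prop :=
  (∀ X ∈ C, Matrix.trace X = 0) ∧
  (∀ X ∈ C, ∀ Y ∈ C, X * Y = Y * X) ∧
  (∀ X ∈ C, IsRealDiagonalizable X) ∧
  (∀ C' : Submodule ℝ (Matrix (Fin m) (Fin m) ℝ), C ≤ C' →
    (∀ X ∈ C', Matrix.trace X = 0) → (∀ X ∈ C', ∀ Y ∈ C', X * Y = Y * X) →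
    (∀ X ∈ C', IsRealDiagonalizable X) → C' = C)

open Module

namespace Module.End

variable {K V : Type*} [Field K] [AddCommGroup V] [Module K V]

theorem maxGenEigenspace_eq_eigenspace_of_iSup_eigenspace_eq_top {f : End K V}
    (hf : ⨆ μ, f.eigenspace μ = ⊤) (μ : K) : f.maxGenEigenspace μ = f.eigenspace μ := by
  set W := ⨆ (ν) (_ : ν ≠ μ), f.maxGenEigenspace ν
  have hspan : f.eigenspace μ ⊔ W = ⊤ := by
    refine eq_top_iff.2 (hf ▸ ?_)
    rw [iSup_split_single _ μ]
    exact sup_le_sup_left (iSup₂_mono fun ν _ => eigenspace_le_maxGenEigenspace) _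
  have hdisj : f.maxGenEigenspace μ ⊓ W = ⊥ :=
    ((f.independent_maxGenEigenspace) μ).eq_bot
  calc f.maxGenEigenspace μ = (f.eigenspace μ ⊔ W) ⊓ f.maxGenEigenspace μ := by
        rw [hspan, top_inf_eq]
    _ = f.eigenspace μ := by
        rw [sup_inf_assoc_of_le _ eigenspace_le_maxGenEigenspace, inf_comm, hdisj, sup_bot_eq]

theorem iSup_eigenspace_add_eq_top_of_commute [FiniteDimensional K V] {f g : End K V}
    (hf : ⨆ μ, f.eigenspace μ = ⊤) (hg : ⨆ μ, g.eigenspace μ = ⊤) (hfg : Commute f g) :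
    ⨆ μ, (f + g).eigenspace μ = ⊤ := by
  have hsup {h : End K V} (hh : ⨆ μ, h.eigenspace μ = ⊤) : ⨆ μ, h.maxGenEigenspace μ = ⊤ :=
    eq_top_iff.2 (hh ▸ iSup_mono fun _ => eigenspace_le_maxGenEigenspace)
  have hjoint := iSup_iInf_maxGenEigenspace_eq_top_of_iSup_maxGenEigenspace_eq_top_of_commute
    ![f, g] (by intro i j _; fin_cases i <;> fin_cases j <;> simp [hfg, hfg.symm])
    (by intro i; fin_cases i <;> simp [hsup hf, hsup hg])
  refine eq_top_iff.2 (hjoint ▸ iSup_le fun χ => le_iSup_of_le (χ 0 + χ 1) fun x hx => ?_)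
  have hfx : x ∈ f.eigenspace (χ 0) := by
    simpa [maxGenEigenspace_eq_eigenspace_of_iSup_eigenspace_eq_top hf] using
      (Submodule.mem_iInf _).1 hx 0
  have hgx : x ∈ g.eigenspace (χ 1) := by
    simpa [maxGenEigenspace_eq_eigenspace_of_iSup_eigenspace_eq_top hg] using
      (Submodule.mem_iInf _).1 hx 1
  rw [mem_eigenspace_iff] at hfx hgx ⊢
  rw [LinearMap.add_apply, hfx, hgx, add_smul]

end Module.End

section Diagonalizable

open End

variable {m : ℕ} {X Y : Matrix (Fin m) (Fin m) ℝ}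

theorem IsRealDiagonalizable.iSup_eigenspace_eq_top (hX : IsRealDiagonalizable X) :
    ⨆ μ, eigenspace (toLin' X) μ = ⊤ := by
  obtain ⟨P, d, hP, rfl⟩ := hX
  have hPsurj : LinearMap.range (toLin' P) = ⊤ := LinearMap.range_eq_top.2 <|
    Matrix.mulVec_surjective_iff_isUnit.2 ((Matrix.isUnit_iff_isUnit_det P).2 hP)
  have hmap (μ : ℝ) : (eigenspace (toLin' (diagonal d)) μ).map (toLin' P) ≤
      eigenspace (toLin' (P * diagonal d * P⁻¹)) μ := by
    rintro _ ⟨v, hv, rfl⟩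
    rw [SetLike.mem_coe, mem_eigenspace_iff, toLin'_apply] at hv
    rw [mem_eigenspace_iff, toLin'_apply, toLin'_apply, mulVec_mulVec, Matrix.mul_assoc,
      nonsing_inv_mul _ hP, Matrix.mul_one, ← mulVec_mulVec, hv, mulVec_smul]
  rw [eq_top_iff, ← hPsurj, LinearMap.range_eq_map, ← iSup_eigenspace_toLin'_diagonal_eq_top d,
    Submodule.map_iSup]
  exact iSup_mono hmap

theorem isRealDiagonalizable_of_basis (b : Basis (Fin m) ℝ (Fin m → ℝ)) (d : Fin m → ℝ)
    (hb : ∀ j, X *ᵥ b j = d j • b j) : IsRealDiagonalizable X := by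
  set e := Pi.basisFun ℝ (Fin m)
  have hinv : e.toMatrix b * b.toMatrix e = 1 := Basis.toMatrix_mul_toMatrix_flip e b
  have hdiag : LinearMap.toMatrix b b (toLin' X) = diagonal d := by
    ext i j
    rw [LinearMap.toMatrix_apply, toLin'_apply, hb, map_smul, b.repr_self, diagonal_apply]
    rcases eq_or_ne i j with rfl | hij
    · simp
    · simp [hij]
  refine ⟨e.toMatrix b, d, isUnit_det_of_right_inverse hinv, ?_⟩
  rw [inv_eq_right_inv hinv, ← hdiag, basis_toMatrix_mul_linearMap_toMatrix_mul_basis_toMatrix,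
    LinearMap.toMatrix_eq_toMatrix', LinearMap.toMatrix'_toLin']

theorem isRealDiagonalizable_of_iSup_eigenspace_eq_top
    (h : ⨆ μ, eigenspace (toLin' X) μ = ⊤) : IsRealDiagonalizable X := by
  have hint : DirectSum.IsInternal fun μ => eigenspace (toLin' X) μ :=
    (DirectSum.isInternal_submodule_iff_iSupIndep_and_iSup_eq_top _).2
      ⟨eigenspaces_iSupIndep _, h⟩
  let c := hint.collectedBasis fun μ => Module.finBasis ℝ (eigenspace (toLin' X) μ)
  let σ := c.indexEquiv (Pi.basisFun ℝ (Fin m))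
  refine isRealDiagonalizable_of_basis (c.reindex σ) (fun j => (σ.symm j).1) fun j => ?_
  rw [c.reindex_apply, ← toLin'_apply, ← mem_eigenspace_iff]
  exact hint.collectedBasis_mem _ _

theorem isRealDiagonalizable_iff_iSup_eigenspace_eq_top :
    IsRealDiagonalizable X ↔ ⨆ μ, eigenspace (toLin' X) μ = ⊤ :=
  ⟨IsRealDiagonalizable.iSup_eigenspace_eq_top, isRealDiagonalizable_of_iSup_eigenspace_eq_top⟩

theorem IsRealDiagonalizable.add_of_commute (hX : IsRealDiagonalizable X)
    (hY : IsRealDiagonalizable Y) (hXY : Commute X Y) : IsRealDiagonalizable (X + Y) := by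
  rw [isRealDiagonalizable_iff_iSup_eigenspace_eq_top] at *
  rw [map_add]
  exact iSup_eigenspace_add_eq_top_of_commute hX hY (hXY.map toLinAlgEquiv')

theorem IsRealDiagonalizable.smul (hX : IsRealDiagonalizable X) (t : ℝ) :
    IsRealDiagonalizable (t • X) := by
  obtain ⟨P, d, hP, rfl⟩ := hX
  exact ⟨P, t • d, hP, by rw [diagonal_smul, Matrix.mul_smul, Matrix.smul_mul]⟩

theorem IsRealDiagonalizable.mul_self (hX : IsRealDiagonalizable X) :
    IsRealDiagonalizable (X * X) := by
  obtain ⟨P, d, hP, rfl⟩ := hX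
  refine ⟨P, fun i => d i * d i, hP, ?_⟩
  rw [← diagonal_mul_diagonal]
  simp only [Matrix.mul_assoc, nonsing_inv_mul_cancel_left _ _ hP]

theorem isRealDiagonalizable_smul_one (t : ℝ) :
    IsRealDiagonalizable (t • 1 : Matrix (Fin m) (Fin m) ℝ) :=
  ⟨1, fun _ => t, by simp, by simp [← smul_one_eq_diagonal]⟩

end Diagonalizable

section Cartan

variable {m : ℕ}

def tracelessSq (X : Matrix (Fin m) (Fin m) ℝ) : Matrix (Fin m) (Fin m) ℝ :=
  X * X - (trace (X * X) / m) • 1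

theorem trace_tracelessSq (X : Matrix (Fin m) (Fin m) ℝ) : trace (tracelessSq X) = 0 := by
  rcases eq_or_ne m 0 with rfl | hm
  · simp [trace]
  · simp [tracelessSq, trace_sub, hm]

theorem continuous_tracelessSq : Continuous (tracelessSq : Matrix (Fin m) (Fin m) ℝ → _) := by
  unfold tracelessSq
  fun_prop

theorem IsRealDiagonalizable.tracelessSq {X : Matrix (Fin m) (Fin m) ℝ}
    (hX : IsRealDiagonalizable X) : IsRealDiagonalizable (tracelessSq X) := by
  rw [_root_.tracelessSq, sub_eq_add_neg, ← neg_smul]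
  exact hX.mul_self.add_of_commute (isRealDiagonalizable_smul_one _)
    ((Commute.one_right _).smul_right _)

theorem IsCartanSubspace.mem_of_commute {C : Submodule ℝ (Matrix (Fin m) (Fin m) ℝ)}
    (hC : IsCartanSubspace C) {w : Matrix (Fin m) (Fin m) ℝ} (htr : trace w = 0)
    (hw : IsRealDiagonalizable w) (hwC : ∀ c ∈ C, Commute c w) : w ∈ C := by
  obtain ⟨htrC, hcommC, hdiagC, hmax⟩ := hC
  have hmem : ∀ X ∈ C ⊔ Submodule.span ℝ {w}, ∃ c ∈ C, ∃ t : ℝ, X = c + t • w := by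
    intro X hX
    obtain ⟨c, hc, _, hy, rfl⟩ := Submodule.mem_sup.1 hX
    obtain ⟨t, rfl⟩ := Submodule.mem_span_singleton.1 hy
    exact ⟨c, hc, t, rfl⟩
  suffices C ⊔ Submodule.span ℝ {w} = C from
    this ▸ Submodule.mem_sup_right (Submodule.mem_span_singleton_self w)
  refine hmax _ le_sup_left ?_ ?_ ?_
  · intro X hX
    obtain ⟨c, hc, t, rfl⟩ := hmem X hX
    simp [htrC c hc, htr]
  · intro X hX Y hY
    obtain ⟨c, hc, t, rfl⟩ := hmem X hX
    obtain ⟨c', hc', t', rfl⟩ := hmem Y hY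
    have h₁ : Commute c (c' + t' • w) :=
      (show Commute c c' from hcommC c hc c' hc').add_right ((hwC c hc).smul_right t')
    have h₂ : Commute (t • w) (c' + t' • w) :=
      ((hwC c' hc').symm.add_right ((Commute.refl w).smul_right t')).smul_left t
    exact h₁.add_left h₂
  · intro X hX
    obtain ⟨c, hc, t, rfl⟩ := hmem X hX
    exact (hdiagC c hc).add_of_commute (hw.smul t) ((hwC c hc).smul_right t)

theorem IsCartanSubspace.tracelessSq_mem {C : Submodule ℝ (Matrix (Fin m) (Fin m) ℝ)}
    (hC : IsCartanSubspace C) {X : Matrix (Fin m) (Fin m) ℝ} (hX : X ∈ C) :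
    tracelessSq X ∈ C := by
  have ⟨_, hcomm, hdiag, _⟩ := hC
  refine hC.mem_of_commute (trace_tracelessSq X) (hdiag X hX).tracelessSq fun c hc => ?_
  have hcX : Commute c X := hcomm c hc X hX
  exact (hcX.mul_right hcX).sub_right ((Commute.one_right c).smul_right _)

end Cartan

theorem GrLimit.mapsTo {M : Type*} [TopologicalSpace M] {W : ℕ → Set M} {L : Set M}
    (hWL : GrLimit W L) {F : M → M} (hF : Continuous F) (hFW : ∀ n, Set.MapsTo F (W n) (W n)) :
    Set.MapsTo F L L := by
  intro v hv
  obtain ⟨u, huW, hu⟩ := hWL.1 v hv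
  exact hWL.2 id strictMono_id (F ∘ u) (fun n => hFW n (huW n)) (F v) ((hF.tendsto v).comp hu)

section Construction

theorem Matrix.entry_eq_zero_of_mem_span {n n' R : Type*} [CommSemiring R]
    {s : Set (Matrix n n' R)} {i : n} {j : n'} (h : ∀ x ∈ s, x i j = 0) {X : Matrix n n' R}
    (hX : X ∈ Submodule.span R s) : X i j = 0 :=
  Submodule.span_le (p := LinearMap.ker (entryLinearMap R R i j)).2 h hX

theorem commute_of_mem_span {R A : Type*} [CommSemiring R] [Semiring A] [Algebra R A]
    {s : Set A} (h : ∀ x ∈ s, ∀ y ∈ s, Commute x y) {X Y : A} (hX : X ∈ Submodule.span R s)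
    (hY : Y ∈ Submodule.span R s) : Commute X Y :=
  Commute.span_left (fun x hx => Commute.span_right (h x hx) Y hY) X hX

theorem Matrix.commute_single_single {n R : Type*} [Fintype n] [DecidableEq n] [Semiring R]
    {a b c d : n} (hbc : b ≠ c) (hda : d ≠ a) (x y : R) :
    Commute (single a b x) (single c d y) := by
  rw [Commute, SemiconjBy, single_mul_single_of_ne (h := hbc), single_mul_single_of_ne (h := hda)]

def Matrix.tracelessUpperTriangular (n R : Type*) [Fintype n] [LinearOrder n] [CommRing R] :
    Submodule R (Matrix n n R) where
  carrier := {X | (∀ i j : n, j < i → X i j = 0) ∧ trace X = 0}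
  add_mem' hX hY := ⟨fun i j h => by simp [hX.1 i j h, hY.1 i j h], by simp [hX.2, hY.2]⟩
  zero_mem' := ⟨fun _ _ _ => rfl, trace_zero _ _⟩
  smul_mem' t X hX := ⟨fun i j h => by simp [hX.1 i j h], by simp [hX.2]⟩

variable {m : ℕ} (a b : Fin m) (P : Finset (Fin m × Fin m))

def diagRootFamily (o : Option P) : Matrix (Fin m) (Fin m) ℝ :=
  o.casesOn' (single a a 1 - single b b 1) fun p => single p.1.1 p.1.2 1

theorem span_diagRootFamily_le (hP : ∀ p ∈ P, p.1 < p.2) :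
    Submodule.span ℝ (Set.range (diagRootFamily a b P)) ≤ tracelessUpperTriangular (Fin m) ℝ := by
  rw [Submodule.span_le]
  rintro _ ⟨_ | ⟨p, hp⟩, rfl⟩
  · refine ⟨fun i j hij => ?_, by simp [diagRootFamily]⟩
    have hoff (c : Fin m) : single c c (1 : ℝ) i j = 0 :=
      single_apply_of_ne _ _ _ _ _ fun h => hij.ne' (h.1.symm.trans h.2)
    simp [diagRootFamily, hoff]
  · exact ⟨fun i j hij => single_apply_of_ne _ _ _ _ _
      (by rintro ⟨rfl, rfl⟩; exact lt_asymm hij (hP p hp)),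
      trace_single_eq_of_ne _ _ _ (hP p hp).ne⟩

theorem linearIndependent_diagRootFamily (hab : a ≠ b) (hP : ∀ p ∈ P, p.1 ≠ p.2) :
    LinearIndependent ℝ (diagRootFamily a b P) := by
  have hE : (fun p : P => single p.1.1 p.1.2 (1 : ℝ)) = stdBasis ℝ (Fin m) (Fin m) ∘ Subtype.val :=
    funext fun p => (stdBasis_eq_single ℝ p.1.1 p.1.2).symm
  refine (hE ▸ (stdBasis ℝ _ _).linearIndependent.comp _ Subtype.val_injective).option
    fun hD => ?_
  have := entry_eq_zero_of_mem_span (i := a) (j := a) ?_ hD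
  · simp [hab.symm] at this
  · rintro _ ⟨⟨p, hp⟩, rfl⟩
    exact single_apply_of_ne _ _ _ _ _ fun h => hP p hp (h.1.trans h.2.symm)

theorem commute_of_mem_span_diagRootFamily (hPP : ∀ p ∈ P, ∀ q ∈ P, p.2 ≠ q.1)
    (hPab : ∀ p ∈ P, p.1 ≠ a ∧ p.1 ≠ b ∧ p.2 ≠ a ∧ p.2 ≠ b) {X Y : Matrix (Fin m) (Fin m) ℝ}
    (hX : X ∈ Submodule.span ℝ (Set.range (diagRootFamily a b P)))
    (hY : Y ∈ Submodule.span ℝ (Set.range (diagRootFamily a b P))) : Commute X Y := by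
  have hDE (q : P) : Commute (single a a 1 - single b b 1) (single q.1.1 q.1.2 (1 : ℝ)) := by
    obtain ⟨h₁, h₂, h₃, h₄⟩ := hPab q.1 q.2
    exact (commute_single_single h₁.symm h₃ (1 : ℝ) 1).sub_left
      (commute_single_single h₂.symm h₄ 1 1)
  refine commute_of_mem_span ?_ hX hY
  rintro _ ⟨_ | p, rfl⟩ _ ⟨_ | q, rfl⟩
  · exact Commute.refl _
  · exact hDE q
  · exact (hDE p).symm
  · exact commute_single_single (hPP p.1 p.2 q.1 q.2) (hPP q.1 q.2 p.1 p.2) (1 : ℝ) 1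

theorem tracelessSq_notMem_span_diagRootFamily (hab : a ≠ b) {k : Fin m} (hka : k ≠ a)
    (hkb : k ≠ b) (hP : ∀ p ∈ P, p.1 ≠ p.2) :
    tracelessSq (single a a 1 - single b b 1) ∉
      Submodule.span ℝ (Set.range (diagRootFamily a b P)) := by
  intro hmem
  have h0 := entry_eq_zero_of_mem_span (i := k) (j := k) ?_ hmem
  · have hsq : (single a a 1 - single b b 1) * (single a a 1 - single b b 1) =
        single a a (1 : ℝ) + single b b 1 := by
      simp [sub_mul, mul_sub, hab, hab.symm]
    simp [tracelessSq, hsq, hka.symm, hkb.symm] at h0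
    exact Fin.pos_iff_nonempty.2 ⟨k⟩ |>.ne' h0
  · rintro _ ⟨_ | ⟨p, hp⟩, rfl⟩
    · simp [diagRootFamily, hka.symm, hkb.symm]
    · exact single_apply_of_ne _ _ _ _ _ fun h => hP p hp (h.1.trans h.2.symm)

theorem exists_abelian_le_tracelessUpperTriangular (hm : 6 ≤ m) :
    ∃ L : Submodule ℝ (Matrix (Fin m) (Fin m) ℝ), L ≤ tracelessUpperTriangular (Fin m) ℝ ∧
      finrank ℝ L = m - 1 ∧ (∀ X ∈ L, ∀ Y ∈ L, Commute X Y) ∧ ∃ D ∈ L, tracelessSq D ∉ L := by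
  let a : Fin m := ⟨2, by omega⟩
  let b : Fin m := ⟨3, by omega⟩
  obtain ⟨P, hPsub, hPcard⟩ := Finset.exists_subset_card_eq
    (s := Finset.Iio a ×ˢ Finset.Ici (⟨4, by omega⟩ : Fin m)) (n := m - 2)
    (by simp only [Finset.card_product, Fin.card_Iio, Fin.card_Ici]; simp [a]; omega)
  have hP (p) (hp : p ∈ P) : (p.1 : ℕ) < 2 ∧ 4 ≤ (p.2 : ℕ) := by
    simpa [a, Fin.lt_def, Fin.le_def] using hPsub hp
  have hab : a ≠ b := by simp [a, b]
  refine ⟨Submodule.span ℝ (Set.range (diagRootFamily a b P)), ?_, ?_, ?_,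
    _, Submodule.subset_span ⟨none, rfl⟩, ?_⟩
  · exact span_diagRootFamily_le a b P fun p hp => Fin.lt_def.2 (by have := hP p hp; omega)
  · rw [finrank_span_eq_card (linearIndependent_diagRootFamily a b P hab fun p hp => ?_),
      Fintype.card_option, Fintype.card_coe, hPcard]
    · omega
    · have := hP p hp; simp [Fin.ext_iff]; omega
  · refine fun X hX Y hY => commute_of_mem_span_diagRootFamily a b P (fun p hp q hq => ?_)
      (fun p hp => ?_) hX hY
    · have := hP p hp; have := hP q hq; simp [Fin.ext_iff]; omega
    · have := hP p hp; simp [Fin.ext_iff, a, b]; omega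
  · refine tracelessSq_notMem_span_diagRootFamily a b P hab (k := ⟨0, by omega⟩)
      (by simp [a]) (by simp [b]) fun p hp => ?_
    have := hP p hp; simp [Fin.ext_iff]; omega

end Construction

/-- For `m ≥ 7`, there is an abelian subalgebra of `𝔰𝔩_m(ℝ)` of dimension `m − 1`,
contained in the standard Borel subalgebra of upper triangular traceless matrices, which
is not a limit in the Grassmannian of Cartan subspaces. -/
theorem stmt9 (m : ℕ) (hm : 7 ≤ m) :
    ∃ L : Submodule ℝ (Matrix (Fin m) (Fin m) ℝ),
      (∀ X ∈ L, (∀ i j : Fin m, j < i → X i j = 0) ∧ Matrix.trace X = 0) ∧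
      Module.finrank ℝ L = m - 1 ∧
      (∀ X ∈ L, ∀ Y ∈ L, X * Y = Y * X) ∧
      ¬ ∃ C : ℕ → Submodule ℝ (Matrix (Fin m) (Fin m) ℝ),
          (∀ n, IsCartanSubspace (C n)) ∧
          GrLimit (fun n => ((C n : Set (Matrix (Fin m) (Fin m) ℝ))))
            (L : Set (Matrix (Fin m) (Fin m) ℝ)) := by
  obtain ⟨L, hL, hrank, hcomm, D, hD, hDL⟩ := exists_abelian_le_tracelessUpperTriangular (m := m)
    (by omega)
  refine ⟨L, fun X hX => hL hX, hrank, hcomm, ?_⟩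
  rintro ⟨C, hC, hlim⟩
  exact hDL (hlim.mapsTo continuous_tracelessSq (fun n _ => (hC n).tracelessSq_mem) hD)
end
end

section
/- Let G be a connected semisimple Lie group of real rank 1 and 𝔤 = 𝔨 ⊕ 𝔞 ⊕ 𝔫 an Iwasawa decomposition with 𝔫 = 𝔤_α ⊕ 𝔤_{2α} the restricted root space decomposition. For any nonzero Y = Y_α + Y_{2α} ∈ 𝔫, the sequence of Cartan subspaces (Ad exp(2nY_α + nY_{2α})(𝔞))_{n∈ℕ} converges in the Grassmannian Gr₁(𝔤) to the line ℝY. -/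
open Filter

noncomputable section

/-- The exponential `exp(ad Z)` of the (nilpotent) adjoint of `Z`, computed as the
truncated exponential series up to order `d`. -/
noncomputable def expAd {𝔤 : Type*} [LieRing 𝔤] [LieAlgebra ℝ 𝔤] (d : ℕ) (Z : 𝔤) :
    𝔤 →ₗ[ℝ] 𝔤 :=
  ∑ k ∈ Finset.range d, ((k.factorial : ℝ))⁻¹ • ((LieAlgebra.ad ℝ 𝔤 Z) ^ k)

/-! The element `Z = 2Yα + Y2α` commutes with `Y = Yα + Y2α`, and the root relations give
`⁅H₀, Z⁆ = 2c • Y`. Hence `(ad Z)²` kills `H₀`, and `exp(ad nZ)` maps the line `ℝH₀` onto the line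
`ℝ(H₀ - 2cn • Y)`. Lines `ℝ(H + aₙ • Y)` with `|aₙ| → ∞` converge to `ℝY`: if `tₙ • (H + aₙ • Y)`
converges, a functional `g` with `g Y = 1` shows that `tₙ(g H + aₙ)` converges, so `tₙ → 0` and
the limit is `(lim tₙaₙ) • Y`. -/

open Topology Bornology

section Grassmannian

variable {E : Type*} [AddCommGroup E] [Module ℝ E] [TopologicalSpace E]
  [IsTopologicalAddGroup E] [ContinuousSMul ℝ E] [T2Space E] [FiniteDimensional ℝ E]

theorem grLimit_lines_add_smul {H Y : E} (hY : Y ≠ 0) {a : ℕ → ℝ}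
    (ha : Tendsto a atTop (cobounded ℝ)) :
    GrLimit (fun n => {v | ∃ t : ℝ, v = t • (H + a n • Y)}) {v | ∃ t : ℝ, v = t • Y} := by
  constructor
  · rintro v ⟨s, rfl⟩
    refine ⟨fun n => (s * (a n)⁻¹) • (H + a n • Y), fun n => ⟨_, rfl⟩, ?_⟩
    have hlim : Tendsto (fun n => (s * (a n)⁻¹) • H + s • Y) atTop (𝓝 (s • Y)) := by
      simpa using (((tendsto_inv₀_cobounded.comp ha).const_mul s).smul_const H).add_const (s • Y)
    refine hlim.congr' ?_
    filter_upwards [ha.eventually_ne_cobounded 0] with n hn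
    rw [smul_add, smul_smul, mul_assoc, inv_mul_cancel₀ hn, mul_one]
  · intro φ hφ u hu v hv
    choose t ht using hu
    obtain ⟨g, hgY⟩ := Module.Projective.exists_dual_eq_one ℝ hY
    have hg : Tendsto (fun n => g (u n)) atTop (𝓝 (g v)) :=
      (g.continuous_of_finiteDimensional.tendsto v).comp hv
    have hgu : ∀ n, g (u n) = t n * (g H + a (φ n)) := by
      intro n
      simp [ht n, hgY, mul_add]
    have hb : Tendsto (fun n => g H + a (φ n)) atTop (cobounded ℝ) :=
      (tendsto_const_add_cobounded _).comp (ha.comp hφ.tendsto_atTop)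
    have ht0 : Tendsto t atTop (𝓝 0) := by
      have := hg.mul (tendsto_inv₀_cobounded.comp hb)
      rw [mul_zero] at this
      refine this.congr' ?_
      filter_upwards [hb.eventually_ne_cobounded 0] with n hn
      simp [hgu, hn]
    have hdecomp : ∀ n, u n = t n • H + (g (u n) - t n * g H) • Y := by
      intro n
      rw [hgu, ht n]
      module
    have hlim : Tendsto u atTop (𝓝 (g v • Y)) := by
      have := (ht0.smul_const H).add ((hg.sub (ht0.mul_const (g H))).smul_const Y)
      simpa [← hdecomp] using this
    exact ⟨g v, tendsto_nhds_unique hv hlim⟩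

end Grassmannian

section LieAlgebra

variable {𝔤 : Type*} [LieRing 𝔤] [LieAlgebra ℝ 𝔤]

theorem expAd_apply_of_lie_lie_eq_zero {d : ℕ} (hd : 2 ≤ d) {Z x : 𝔤} (h : ⁅Z, ⁅Z, x⁆⁆ = 0) :
    expAd d Z x = x + ⁅Z, x⁆ := by
  obtain ⟨m, rfl⟩ := Nat.exists_eq_add_of_le' hd
  have hsq : ∀ k, (LieAlgebra.ad ℝ 𝔤 Z ^ (k + 2)) x = 0 := fun k => by
    rw [pow_add, Module.End.mul_apply, sq, Module.End.mul_apply]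
    simp [h]
  rw [expAd, LinearMap.sum_apply, Finset.sum_range_succ', Finset.sum_range_succ',
    Finset.sum_eq_zero fun k _ => by rw [LinearMap.smul_apply, hsq, smul_zero]]
  simp [add_comm]

theorem image_expAd_smul_line {d : ℕ} (hd : 2 ≤ d) {H Y Z : 𝔤} {k : ℝ} (hZY : ⁅Z, Y⁆ = 0)
    (hHZ : ⁅H, Z⁆ = k • Y) (s : ℝ) :
    (fun v => expAd d (s • Z) v) '' {v | ∃ t : ℝ, v = t • H} =
      {v | ∃ t : ℝ, v = t • (H + (-(k * s)) • Y)} := by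
  have hZH : ∀ t : ℝ, ⁅s • Z, t • H⁆ = (-(k * s * t)) • Y := fun t => by
    rw [smul_lie, lie_smul, ← lie_skew, hHZ]
    module
  have hexp : ∀ t : ℝ, expAd d (s • Z) (t • H) = t • (H + (-(k * s)) • Y) := fun t => by
    rw [expAd_apply_of_lie_lie_eq_zero hd (by rw [hZH, lie_smul, smul_lie, hZY]; simp), hZH]
    module
  ext v
  simp only [Set.mem_image]
  constructor
  · rintro ⟨_, ⟨t, rfl⟩, rfl⟩
    exact ⟨t, hexp t⟩
  · rintro ⟨t, rfl⟩
    exact ⟨_, ⟨t, rfl⟩, hexp t⟩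

end LieAlgebra

theorem stmt12_general (𝔤 : Type*) [LieRing 𝔤] [LieAlgebra ℝ 𝔤] [Module.Finite ℝ 𝔤]
    [TopologicalSpace 𝔤] [IsTopologicalAddGroup 𝔤] [ContinuousSMul ℝ 𝔤] [T2Space 𝔤]
    (H₀ : 𝔤) (c : ℝ) (hc : 0 < c)
    (gα g2α : Submodule ℝ 𝔤)
    (hα : ∀ v ∈ gα, ⁅H₀, v⁆ = c • v)
    (h2α : ∀ v ∈ g2α, ⁅H₀, v⁆ = (2 * c) • v)
    (hroot2 : ∀ v ∈ gα, ∀ w ∈ g2α, ⁅v, w⁆ = 0)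
    (Yα Y2α : 𝔤) (hYα : Yα ∈ gα) (hY2α : Y2α ∈ g2α) (hY : Yα + Y2α ≠ 0) :
    GrLimit
      (fun n => (fun v =>
          expAd (Module.finrank ℝ 𝔤 + 1) ((n : ℝ) • ((2 : ℝ) • Yα + Y2α)) v) ''
        {v : 𝔤 | ∃ t : ℝ, v = t • H₀})
      {v : 𝔤 | ∃ t : ℝ, v = t • (Yα + Y2α)} := by
  have : Nontrivial 𝔤 := ⟨⟨_, 0, hY⟩⟩
  have hd : 2 ≤ Module.finrank ℝ 𝔤 + 1 := by
    have := Module.finrank_pos (R := ℝ) (M := 𝔤)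
    omega
  have hZY : ⁅(2 : ℝ) • Yα + Y2α, Yα + Y2α⁆ = 0 := by
    have h := hroot2 Yα hYα Y2α hY2α
    simp [lie_add, add_lie, h, ← lie_skew Y2α Yα]
  have hHZ : ⁅H₀, (2 : ℝ) • Yα + Y2α⁆ = (2 * c) • (Yα + Y2α) := by
    rw [lie_add, lie_smul, hα Yα hYα, h2α Y2α hY2α]
    module
  simp only [image_expAd_smul_line hd hZY hHZ]
  refine grLimit_lines_add_smul hY ?_
  have h2c : (0 : ℝ) < 2 * c := by positivity
  exact (tendsto_neg_atTop_atBot.comp (tendsto_natCast_atTop_atTop.const_mul_atTop h2c)).mono_right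
    IsOrderBornology.atBot_le_cobounded

/-- Let `𝔤` be the Lie algebra of a connected semisimple Lie group of real rank one,
`𝔞 = ℝH₀` a Cartan subspace, and `𝔫 = 𝔤_α ⊕ 𝔤_{2α}` the restricted root space
decomposition. For every nonzero `Y = Y_α + Y_{2α} ∈ 𝔫`, the sequence of Cartan
subspaces `Ad exp(2nY_α + nY_{2α})(𝔞)` converges in the Grassmannian of lines of `𝔤` to
the line `ℝY`. -/
theorem stmt12 (𝔤 : Type*) [LieRing 𝔤] [LieAlgebra ℝ 𝔤] [Module.Finite ℝ 𝔤]
    [TopologicalSpace 𝔤] [IsTopologicalAddGroup 𝔤] [ContinuousSMul ℝ 𝔤] [T2Space 𝔤]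
    [LieAlgebra.IsSemisimple ℝ 𝔤]
    (H₀ : 𝔤) (hH₀ : H₀ ≠ 0) (c : ℝ) (hc : 0 < c)
    (gα g2α : Submodule ℝ 𝔤)
    (hα : ∀ v ∈ gα, ⁅H₀, v⁆ = c • v)
    (h2α : ∀ v ∈ g2α, ⁅H₀, v⁆ = (2 * c) • v)
    (hroot1 : ∀ v ∈ gα, ∀ w ∈ gα, ⁅v, w⁆ ∈ g2α)
    (hroot2 : ∀ v ∈ gα, ∀ w ∈ g2α, ⁅v, w⁆ = 0)
    (hroot3 : ∀ v ∈ g2α, ∀ w ∈ g2α, ⁅v, w⁆ = 0)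
    (Yα Y2α : 𝔤) (hYα : Yα ∈ gα) (hY2α : Y2α ∈ g2α) (hY : Yα + Y2α ≠ 0)
    (hnil : (LieAlgebra.ad ℝ 𝔤 ((2 : ℝ) • Yα + Y2α)) ^ (Module.finrank ℝ 𝔤) = 0) :
    GrLimit
      (fun n => (fun v =>
          expAd (Module.finrank ℝ 𝔤 + 1) ((n : ℝ) • ((2 : ℝ) • Yα + Y2α)) v) ''
        {v : 𝔤 | ∃ t : ℝ, v = t • H₀})
      {v : 𝔤 | ∃ t : ℝ, v = t • (Yα + Y2α)} :=
  stmt12_general 𝔤 H₀ c hc gα g2α hα h2α hroot2 Yα Y2α hYα hY2α hY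
end
end
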